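/- Let a, a' ∈ ℤ² be linearly independent, let μ ≥ 1, σ ≥ 1 and c, c' ∈ ℝ. Define E := {x ∈ [0,2π]² : dist(σ a·x − c, 2πℤ) ≤ 1/μ} and E' := {x ∈ [0,2π]² : dist(σ a'·x − c', 2πℤ) ≤ 1/μ}. Then the Lebesgue measure of E ∩ E' satisfies |E ∩ E'| ≤ C(a,a') μ^{−2}, with a constant C(a,a') depending only on a and a' (not on μ, σ, c, c'). -/
import Mathlib

open MeasureTheory Real Filter Topology

noncomputable section

abbrev V2 : Type := ℝ × ℝ
abbrev V3 : Type := Fin 3 → ℝ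

def Q2 : Set V2 := Set.Icc (0:ℝ) (2*π) ×ˢ Set.Icc (0:ℝ) (2*π)

def pd1 (f : V2 → ℝ) (x : V2) : ℝ := fderiv ℝ f x (1, 0)
def pd2 (f : V2 → ℝ) (x : V2) : ℝ := fderiv ℝ f x (0, 1)

/-- `a·x = a₁x₁ + a₂x₂` for `a ∈ ℤ²`. -/
def adot (a : ℤ × ℤ) (x : V2) : ℝ := a.1 * x.1 + a.2 * x.2

/-- The periodic strip `{x ∈ [0,2π]² : dist(σ a·x − c, 2πℤ) ≤ 1/μ}`. -/
def strip (μ σ c : ℝ) (a : ℤ × ℤ) : Set V2 :=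
  {x ∈ Q2 | ∃ j : ℤ, |σ * adot a x - c - 2*π*j| ≤ 1/μ}

/- ### Auxiliary definitions -/

def la (a : ℤ × ℤ) : V2 →ₗ[ℝ] ℝ :=
  (a.1 : ℝ) • LinearMap.fst ℝ ℝ ℝ + (a.2 : ℝ) • LinearMap.snd ℝ ℝ ℝ

def Tmap (a a' : ℤ × ℤ) : V2 →ₗ[ℝ] V2 := (la a).prod (la a')

lemma Tmap_apply (a a' : ℤ × ℤ) (x : V2) : Tmap a a' x = (adot a x, adot a' x) := by
  simp [Tmap, la, adot, LinearMap.prod_apply]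

lemma Tmap_det (a a' : ℤ × ℤ) :
    LinearMap.det (Tmap a a') = (a.1 * a'.2 - a.2 * a'.1 : ℝ) := by
  rw [← LinearMap.det_toMatrix (Module.Basis.finTwoProd ℝ)]
  have : LinearMap.toMatrix (Module.Basis.finTwoProd ℝ) (Module.Basis.finTwoProd ℝ) (Tmap a a')
      = !![(a.1:ℝ), a.2; a'.1, a'.2] := by
    ext i j
    fin_cases i <;> fin_cases j <;>
      simp [LinearMap.toMatrix_apply, Tmap_apply, Module.Basis.finTwoProd_zero, Module.Basis.finTwoProd_one,
        Module.Basis.coe_finTwoProd_repr, adot]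
  rw [this, Matrix.det_fin_two_of]

/-- Bound for `a·x` on `Q2`. -/
def Ra (a : ℤ × ℤ) : ℝ := 2*π*(|(a.1:ℝ)| + |(a.2:ℝ)|)

lemma Ra_nonneg (a : ℤ × ℤ) : 0 ≤ Ra a := by
  unfold Ra
  positivity

lemma abs_adot_le (a : ℤ × ℤ) {x : V2} (hx : x ∈ Q2) : |adot a x| ≤ Ra a := by
  obtain ⟨⟨h1, h2⟩, h3, h4⟩ := hx
  have e1 : |x.1| ≤ 2*π := by rw [abs_of_nonneg h1]; exact h2
  have e2 : |x.2| ≤ 2*π := by rw [abs_of_nonneg h3]; exact h4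
  calc |adot a x| ≤ |(a.1:ℝ) * x.1| + |(a.2:ℝ) * x.2| := abs_add_le _ _
    _ = |(a.1:ℝ)| * |x.1| + |(a.2:ℝ)| * |x.2| := by rw [abs_mul, abs_mul]
    _ ≤ |(a.1:ℝ)| * (2*π) + |(a.2:ℝ)| * (2*π) := by gcongr
    _ = Ra a := by rw [Ra]; ring

/-- The 1-D strip as a finite union of intervals. -/
def Sset (μ σ c R : ℝ) : Set ℝ :=
  ⋃ j ∈ Finset.Icc ⌈(-(σ*R) - c - 1)/(2*π)⌉ ⌊(σ*R - c + 1)/(2*π)⌋,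
    Set.Icc ((c + 2*π*j - 1/μ)/σ) ((c + 2*π*j + 1/μ)/σ)

lemma mem_Sset {μ σ c R u : ℝ} (hμ : 1 ≤ μ) (hσ : 1 ≤ σ) (hu : |u| ≤ R)
    {j : ℤ} (hj : |σ * u - c - 2*π*j| ≤ 1/μ) : u ∈ Sset μ σ c R := by
  have hπ : (0:ℝ) < 2*π := by have := pi_pos; linarith
  have hσ0 : (0:ℝ) < σ := lt_of_lt_of_le one_pos hσ
  have hμ1 : 1/μ ≤ 1 := by
    rw [div_le_one (lt_of_lt_of_le one_pos hμ)]; exact hμ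
  have habs := abs_le.1 hj
  have habs1 := abs_le.1 hu
  have hσu : σ * u ≤ σ * R := by nlinarith
  have hσu' : -(σ * R) ≤ σ * u := by nlinarith
  unfold Sset
  have hjmem : j ∈ Finset.Icc ⌈(-(σ*R) - c - 1)/(2*π)⌉ ⌊(σ*R - c + 1)/(2*π)⌋ := by
    refine Finset.mem_Icc.2 ⟨Int.ceil_le.2 ?_, Int.le_floor.2 ?_⟩
    · rw [div_le_iff₀ hπ]
      nlinarith [habs.1, habs.2, hσu, hσu']
    · rw [le_div_iff₀ hπ]
      nlinarith [habs.1, habs.2, hσu, hσu']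
  have hmem : u ∈ Set.Icc ((c + 2*π*j - 1/μ)/σ) ((c + 2*π*j + 1/μ)/σ) := by
    constructor
    · rw [div_le_iff₀ hσ0]
      nlinarith [habs.1, habs.2]
    · rw [le_div_iff₀ hσ0]
      nlinarith [habs.1, habs.2]
  exact Set.mem_biUnion hjmem hmem

lemma vol_Sset {μ σ c R : ℝ} (hμ : 1 ≤ μ) (hσ : 1 ≤ σ) (hR : 0 ≤ R) :
    volume (Sset μ σ c R) ≤ ENNReal.ofReal (2*((R+1)/π + 1)/μ) := by
  have hπ : (0:ℝ) < π := pi_pos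
  have hσ0 : (0:ℝ) < σ := lt_of_lt_of_le one_pos hσ
  have hμ0 : (0:ℝ) < μ := lt_of_lt_of_le one_pos hμ
  unfold Sset
  set A : ℝ := (-(σ*R) - c - 1)/(2*π) with hA
  set B : ℝ := (σ*R - c + 1)/(2*π) with hB
  have hvol : ∀ j : ℤ, volume (Set.Icc ((c + 2*π*j - 1/μ)/σ) ((c + 2*π*j + 1/μ)/σ))
      = ENNReal.ofReal ((2/μ)/σ) := by
    intro j
    rw [Real.volume_Icc]
    congr 1
    field_simp
    ring
  have hcard : ((Finset.Icc ⌈A⌉ ⌊B⌋).card : ℝ) ≤ σ * ((R+1)/π + 1) := by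
    rw [Int.card_Icc]
    have hB1 : (⌊B⌋:ℝ) ≤ B := Int.floor_le B
    have hA1 : A ≤ (⌈A⌉:ℝ) := Int.le_ceil A
    have hBA : B - A + 1 ≤ σ*((R+1)/π + 1) := by
      have e1 : B - A + 1 = (σ*R + 1 + π)/π := by
        rw [hA, hB]; field_simp; ring
      have e2 : σ*((R+1)/π + 1) = (σ*(R+1) + σ*π)/π := by
        field_simp
      rw [e1, e2]
      rw [div_le_div_iff₀ hπ hπ]
      nlinarith [hπ, hσ, mul_nonneg (mul_nonneg (sub_nonneg.2 hσ) (by positivity : (0:ℝ) ≤ 1+π)) hπ.le]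
    rcases le_total (⌊B⌋ + 1 - ⌈A⌉) 0 with hz | hz
    · rw [Int.toNat_of_nonpos hz]
      push_cast
      positivity
    · have h5 : ((⌊B⌋ + 1 - ⌈A⌉).toNat : ℤ) = ⌊B⌋ + 1 - ⌈A⌉ := Int.toNat_of_nonneg hz
      have h6 : ((⌊B⌋ + 1 - ⌈A⌉).toNat : ℝ) = (⌊B⌋:ℝ) + 1 - (⌈A⌉:ℝ) := by
        exact_mod_cast h5
      rw [h6]
      linarith
  calc volume (⋃ j ∈ Finset.Icc ⌈A⌉ ⌊B⌋,
          Set.Icc ((c + 2*π*j - 1/μ)/σ) ((c + 2*π*j + 1/μ)/σ))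
      ≤ ∑ j ∈ Finset.Icc ⌈A⌉ ⌊B⌋,
          volume (Set.Icc ((c + 2*π*j - 1/μ)/σ) ((c + 2*π*j + 1/μ)/σ)) :=
        measure_biUnion_finset_le _ _
    _ = (Finset.Icc ⌈A⌉ ⌊B⌋).card • ENNReal.ofReal ((2/μ)/σ) := by
        rw [Finset.sum_congr rfl fun j _ => hvol j, Finset.sum_const]
    _ ≤ ENNReal.ofReal (2*((R+1)/π + 1)/μ) := by
        rw [nsmul_eq_mul, ← ENNReal.ofReal_natCast, ← ENNReal.ofReal_mul (by positivity)]
        apply ENNReal.ofReal_le_ofReal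
        calc ((Finset.Icc ⌈A⌉ ⌊B⌋).card : ℝ) * ((2/μ)/σ)
            ≤ (σ * ((R+1)/π + 1)) * ((2/μ)/σ) := by
              apply mul_le_mul_of_nonneg_right hcard (by positivity)
          _ = 2*((R+1)/π + 1)/μ := by field_simp

/-- the supports of two Mikado flows with non-parallel oscillation
directions intersect in a set of measure `≲ μ⁻²`, uniformly in `μ, σ, c, c'`. -/
theorem stmt10 (a a' : ℤ × ℤ) (h : a.1 * a'.2 - a.2 * a'.1 ≠ 0) :
    ∃ C : ℝ, 0 < C ∧ ∀ μ σ c c' : ℝ, 1 ≤ μ → 1 ≤ σ →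
      volume (strip μ σ c a ∩ strip μ σ c' a') ≤ ENNReal.ofReal (C / μ^2) := by
  have hπ : (0:ℝ) < π := pi_pos
  have hd : ((a.1 * a'.2 - a.2 * a'.1 : ℤ) : ℝ) ≠ 0 := Int.cast_ne_zero.2 h
  have hd' : ((a.1:ℝ) * (a'.2:ℝ) - (a.2:ℝ) * (a'.1:ℝ)) ≠ 0 := by push_cast at hd; exact hd
  have habs : (0:ℝ) < |(a.1:ℝ) * (a'.2:ℝ) - (a.2:ℝ) * (a'.1:ℝ)| := abs_pos.2 hd'
  have hRa := Ra_nonneg a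
  have hRa' := Ra_nonneg a'
  refine ⟨|(a.1:ℝ) * (a'.2:ℝ) - (a.2:ℝ) * (a'.1:ℝ)|⁻¹ *
      (2*((Ra a + 1)/π + 1)) * (2*((Ra a' + 1)/π + 1)), by positivity, ?_⟩
  intro μ σ c c' hμ hσ
  have hμ0 : (0:ℝ) < μ := lt_of_lt_of_le one_pos hμ
  have hsub : strip μ σ c a ∩ strip μ σ c' a' ⊆
      Tmap a a' ⁻¹' (Sset μ σ c (Ra a) ×ˢ Sset μ σ c' (Ra a')) := by
    rintro x ⟨⟨hxQ, j, hj⟩, ⟨hxQ', j', hj'⟩⟩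
    rw [Set.mem_preimage, Tmap_apply, Set.mem_prod]
    exact ⟨mem_Sset hμ hσ (abs_adot_le a hxQ) hj,
      mem_Sset hμ hσ (abs_adot_le a' hxQ') hj'⟩
  have hdet : LinearMap.det (Tmap a a') ≠ 0 := by rw [Tmap_det]; push_cast; exact hd'
  calc volume (strip μ σ c a ∩ strip μ σ c' a')
      ≤ volume (Tmap a a' ⁻¹' (Sset μ σ c (Ra a) ×ˢ Sset μ σ c' (Ra a'))) :=
        measure_mono hsub
    _ = ENNReal.ofReal |(LinearMap.det (Tmap a a'))⁻¹| *
          volume (Sset μ σ c (Ra a) ×ˢ Sset μ σ c' (Ra a')) :=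
        Measure.addHaar_preimage_linearMap volume hdet _
    _ = ENNReal.ofReal |((a.1:ℝ) * (a'.2:ℝ) - (a.2:ℝ) * (a'.1:ℝ))⁻¹| *
          (volume (Sset μ σ c (Ra a)) * volume (Sset μ σ c' (Ra a'))) := by
        rw [Tmap_det, Measure.volume_eq_prod, Measure.prod_prod]
    _ ≤ ENNReal.ofReal |((a.1:ℝ) * (a'.2:ℝ) - (a.2:ℝ) * (a'.1:ℝ))⁻¹| *
          (ENNReal.ofReal (2*((Ra a + 1)/π + 1)/μ) *
           ENNReal.ofReal (2*((Ra a' + 1)/π + 1)/μ)) := by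
        exact mul_le_mul_right
          (mul_le_mul' (vol_Sset hμ hσ hRa) (vol_Sset hμ hσ hRa')) _
    _ = ENNReal.ofReal (|(a.1:ℝ) * (a'.2:ℝ) - (a.2:ℝ) * (a'.1:ℝ)|⁻¹ *
          (2*((Ra a + 1)/π + 1)) * (2*((Ra a' + 1)/π + 1)) / μ^2) := by
        rw [← ENNReal.ofReal_mul (by positivity),
          ← ENNReal.ofReal_mul (abs_nonneg _)]
        congr 1
        rw [abs_inv]
        field_simp
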